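/- (Taut) Every tautologous formula is deducible: if a formula s is a substitution instance of a valid propositional formula, then ∅ ⊢ s. -/

import Mathlib

namespace PTT


/-- Simple types over a single base type `B`. -/
inductive Ty : Type
  | base : Ty
  | arrow : Ty → Ty → Ty
deriving DecidableEq

/-- Names: the constants `⊥` and `→`, and variables (an index together with a type). -/
inductive Name : Type
  | bot : Name
  | imp : Name
  | var : ℕ → Ty → Name
deriving DecidableEq

/-- The type of a name. -/
def Name.ty : Name → Ty
  | .bot => .base
  | .imp => .arrow .base (.arrow .base .base)
  | .var _ σ => σ

/-- Terms: names, abstraction over a variable, application. -/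
inductive Tm : Type
  | name : Name → Tm
  | lam : ℕ → Ty → Tm → Tm
  | app : Tm → Tm → Tm
deriving DecidableEq

/-- The term `⊥`. -/
def botTm : Tm := .name .bot

/-- The variable `(n, σ)` as a term. -/
def vr (n : ℕ) (σ : Ty) : Tm := .name (.var n σ)

/-- Implication `s → t`. -/
def impTm (s t : Tm) : Tm := .app (.app (.name .imp) s) t

/-- `⊤ := ⊥ → ⊥`. -/
def topTm : Tm := impTm botTm botTm

/-- `¬ s := s → ⊥`. -/
def negTm (s : Tm) : Tm := impTm s botTm

/-- `s ∨ t := (s → t) → t`. -/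
def orTm (s t : Tm) : Tm := impTm (impTm s t) t

/-- `s ∧ t := ¬(¬s ∨ ¬t)`. -/
def andTm (s t : Tm) : Tm := negTm (orTm (negTm s) (negTm t))

/-- `s ≡ t := (s → t) ∧ (t → s)`. -/
def equivTm (s t : Tm) : Tm := andTm (impTm s t) (impTm t s)

/-- The typing relation. -/
inductive HasTy : Tm → Ty → Prop
  | name (x : Name) : HasTy (.name x) x.ty
  | lam {n σ s τ} : HasTy s τ → HasTy (.lam n σ s) (.arrow σ τ)
  | app {s t σ τ} : HasTy s (.arrow σ τ) → HasTy t σ → HasTy (.app s t) τ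

/-- Free variables of a term. -/
def fv : Tm → Finset (ℕ × Ty)
  | .name (.var n σ) => {(n, σ)}
  | .name _ => ∅
  | .lam n σ s => (fv s).erase (n, σ)
  | .app s t => fv s ∪ fv t

/-- A term is closed if it has no free variables. -/
def Closed (s : Tm) : Prop := fv s = ∅

/-- Capture-free parallel substitution (bound variables are renamed). -/
def substAux (ρ : ℕ × Ty → Tm) : Tm → Tm
  | .name (.var n σ) => ρ (n, σ)
  | .name x => .name x
  | .app s t => .app (substAux ρ s) (substAux ρ t)
  | .lam n σ s =>
      let used : Finset ℕ :=
        ((fv s).erase (n, σ)).biUnion (fun p => (fv (ρ p)).image Prod.fst)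
      let m : ℕ := used.sup id + 1
      .lam m σ (substAux (Function.update ρ (n, σ) (vr m σ)) s)

/-- Capture-free substitution `s[(n,σ) := t]`. -/
def subst (s : Tm) (n : ℕ) (σ : Ty) (t : Tm) : Tm :=
  substAux (Function.update (fun p => vr p.1 p.2) (n, σ) t) s

/-- Contexts: terms with exactly one hole (possibly under binders). -/
inductive Ctx : Type
  | hole : Ctx
  | lam : ℕ → Ty → Ctx → Ctx
  | appL : Ctx → Tm → Ctx
  | appR : Tm → Ctx → Ctx

/-- Filling the hole of a context with a term (capturing is allowed). -/
def Ctx.fill : Ctx → Tm → Tm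
  | .hole, s => s
  | .lam n σ C, s => .lam n σ (C.fill s)
  | .appL C t, s => .app (C.fill s) t
  | .appR t C, s => .app t (C.fill s)

/-- `C` captures the variable `p` if the hole of `C` lies below a binder for `p`. -/
def Ctx.captures : Ctx → ℕ × Ty → Prop
  | .hole, _ => False
  | .lam n σ C, p => p = (n, σ) ∨ C.captures p
  | .appL C _, p => C.captures p
  | .appR _ C, p => C.captures p

/-- `C` is admissible for `A` if it captures no variable free in `A`. -/
def Ctx.Admissible (C : Ctx) (A : Finset Tm) : Prop :=
  ∀ p ∈ A.biUnion fv, ¬ C.captures p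

/-- `s` is a subterm of `t`. -/
def Subterm (s t : Tm) : Prop := ∃ C : Ctx, C.fill s = t

/-- β-redexes. -/
def IsBetaRedex : Tm → Prop
  | .app (.lam _ _ _) _ => True
  | _ => False

/-- A term is β-normal if none of its subterms is a β-redex. -/
def BetaNormal (t : Tm) : Prop := ∀ s, Subterm s t → ¬ IsBetaRedex s

/-- Lambda equivalence: the least equivalence on well-typed terms containing
α-, β-, η-conversion and closed under arbitrary contexts. -/
inductive LamEq : Tm → Tm → Prop
  | refl {s σ} : HasTy s σ → LamEq s s
  | symm {s t} : LamEq s t → LamEq t s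
  | trans {s t u} : LamEq s t → LamEq t u → LamEq s u
  | alpha {n m σ s τ} : HasTy (.lam n σ s) τ → (m, σ) ∉ fv s →
      LamEq (.lam n σ s) (.lam m σ (subst s n σ (vr m σ)))
  | beta {n σ s t τ} : HasTy (.app (.lam n σ s) t) τ →
      LamEq (.app (.lam n σ s) t) (subst s n σ t)
  | eta {n σ s τ} : HasTy (.lam n σ (.app s (vr n σ))) τ → (n, σ) ∉ fv s →
      LamEq (.lam n σ (.app s (vr n σ))) s
  | ctx {s t σ} (C : Ctx) : LamEq s t → HasTy (C.fill s) σ → LamEq (C.fill s) (C.fill t)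

/-- The standard set-theoretic interpretation of types: `B` is interpreted as the
two truth values (`Bool`), functional types as full function spaces. -/
def Ty.sem : Ty → Type
  | .base => Bool
  | .arrow σ τ => σ.sem → τ.sem

def Ty.semDefault : (σ : Ty) → σ.sem
  | .base => false
  | .arrow _ τ => fun _ => τ.semDefault

instance (σ : Ty) : Inhabited σ.sem := ⟨σ.semDefault⟩

noncomputable instance Ty.semFintype : (σ : Ty) → Fintype σ.sem
  | .base => inferInstanceAs (Fintype Bool)
  | .arrow σ τ =>
      letI := Ty.semFintype σ
      letI := Ty.semFintype τ
      letI := Classical.decEq σ.sem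
      inferInstanceAs (Fintype (σ.sem → τ.sem))

def Ty.semCast {σ τ : Ty} (h : σ = τ) (v : σ.sem) : τ.sem := h ▸ v

/-- An interpretation assigns to every variable a value of the corresponding type
(the constants `⊥` and `→` have their values fixed). -/
def Interp : Type := ℕ → (σ : Ty) → σ.sem

def Interp.update (I : Interp) (n : ℕ) (σ : Ty) (v : σ.sem) : Interp :=
  fun m τ => if h : m = n ∧ τ = σ then Ty.semCast h.2.symm v else I m τ

/-- Type inference. -/
def typeOf : Tm → Option Ty
  | .name x => some x.ty
  | .lam _ σ s => (typeOf s).map (Ty.arrow σ)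
  | .app s t =>
      match typeOf s, typeOf t with
      | some (.arrow σ τ), some σ' => if σ = σ' then some τ else none
      | _, _ => none

/-- The canonical extension `Î` of an interpretation to all terms: `eval I s σ`
is the value of `s` at type `σ` (on well-typed terms this is the usual
denotation; junk default values are used at type mismatches). -/
def eval (I : Interp) : Tm → (σ : Ty) → σ.sem
  | .name (.var n τ), σ => if h : τ = σ then Ty.semCast h (I n τ) else default
  | .name .bot, σ =>
      match σ with
      | .base => false
      | _ => default
  | .name .imp, σ =>
      match σ with
      | .arrow .base (.arrow .base .base) => fun a b => !a || b
      | _ => default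
  | .app s t, σ =>
      match typeOf t with
      | some τ => eval I s (.arrow τ σ) (eval I t τ)
      | none => default
  | .lam n τ s, σ =>
      match σ with
      | .base => default
      | .arrow σ₁ σ₂ =>
          if h : σ₁ = τ then
            fun a => eval (I.update n τ (Ty.semCast h a)) s σ₂
          else default

/-- `I` satisfies the formula `s` if `Î s = 1`. -/
def Satisfies (I : Interp) (s : Tm) : Prop := eval I s .base = true

/-- A formula is valid if every interpretation satisfies it. -/
def ValidFml (s : Tm) : Prop := ∀ I : Interp, Satisfies I s

/-- A sequent `A ⇒ s` is valid if every interpretation satisfying `A` satisfies `s`. -/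
def ValidSeq (A : Finset Tm) (s : Tm) : Prop :=
  ∀ I : Interp, (∀ t ∈ A, Satisfies I t) → Satisfies I s

/-- Finite disjunction (the empty disjunction is `⊥`). -/
def orList : List Tm → Tm
  | [] => botTm
  | [s] => s
  | s :: l => orTm s (orList l)

/-- Finite conjunction (the empty conjunction is `⊤`). -/
def andList : List Tm → Tm
  | [] => topTm
  | [s] => s
  | s :: l => andTm s (andList l)

/-- The argument types of a type (every type has the form `σ₁…σₙB`). -/
def Ty.args : Ty → List Ty
  | .base => []
  | .arrow σ τ => σ :: τ.args

/-- Tuples of values along a list of types. -/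
def Tup : List Ty → Type
  | [] => PUnit
  | σ :: l => σ.sem × Tup l

noncomputable instance TupFintype : (l : List Ty) → Fintype (Tup l)
  | [] => inferInstanceAs (Fintype PUnit)
  | σ :: l =>
      letI := TupFintype l
      inferInstanceAs (Fintype (σ.sem × Tup l))

/-- Applying a function value to a tuple of arguments (the result type is `B`). -/
def Ty.applyTup : (σ : Ty) → σ.sem → Tup σ.args → Bool
  | .base, a, _ => a
  | .arrow _ τ, f, p => τ.applyTup (f p.1) p.2

/-- Quote/identity data for each type in a list: a quote function and the term `≐`. -/
def ArgData : List Ty → Type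
  | [] => PUnit
  | σ :: l => ((σ.sem → Tm) × Tm) × ArgData l

/-- The conjunction list `x_k ≐_{σ_k} (↓_{σ_k} b_k), …` for a tuple `b`. -/
def eqConj : (l : List Ty) → ArgData l → ℕ → Tup l → List Tm
  | [], _, _, _ => []
  | σ :: l, (d, ds), k, (b, bs) =>
      (.app (.app d.2 (vr k σ)) (d.1 b)) :: eqConj l ds (k + 1) bs

/-- `λ x_k : σ_k. …` binding one variable for each type in the list. -/
def mkLams : (l : List Ty) → ℕ → Tm → Tm
  | [], _, body => body
  | σ :: l, k, body => .lam k σ (mkLams l (k + 1) body)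

/-- The body of the quote term
`↓_{σ₁…σₙB} a := λx₁…xₙ. ⋁_{b₁…bₙ, a b₁…bₙ = 1} ⋀_j x_j ≐_{σ_j} (↓_{σ_j} b_j)`. -/
noncomputable def quoteBodyAux (σ : Ty) (ad : ArgData σ.args) (a : σ.sem) : Tm :=
  mkLams σ.args 0 (orList
    ((((Finset.univ : Finset (Tup σ.args)).toList.filter
        (fun b => σ.applyTup a b))).map
      (fun b => andList (eqConj σ.args ad 0 b))))

/-- `∀σ := λf. ⋀_{a ∈ Bσ} f (↓σ a)`, given the quote function for `σ`. -/
noncomputable def allTmAux (σ : Ty) (q : σ.sem → Tm) : Tm :=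
  .lam 0 (.arrow σ .base)
    (andList (((Finset.univ : Finset σ.sem).toList).map
      (fun a => .app (vr 0 (.arrow σ .base)) (q a))))

mutual
  /-- The quote function `↓σ` together with the identity term `≐σ`. -/
  noncomputable def quoteEq : (σ : Ty) → ((σ.sem → Tm) × Tm)
    | .base =>
        (fun a => quoteBodyAux .base PUnit.unit a,
         .lam 0 .base (.lam 1 .base (equivTm (vr 0 .base) (vr 1 .base))))
    | .arrow σ τ =>
        (fun a => quoteBodyAux (.arrow σ τ) ((quoteEq σ, argData τ) : ArgData (σ :: τ.args)) a,
         .lam 0 (.arrow σ τ) (.lam 1 (.arrow σ τ)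
           (.app (allTmAux σ (quoteEq σ).1)
             (.lam 2 σ
               (.app (.app (quoteEq τ).2
                  (.app (vr 0 (.arrow σ τ)) (vr 2 σ)))
                (.app (vr 1 (.arrow σ τ)) (vr 2 σ)))))))
  /-- Quote/identity data for all argument types of a type. -/
  noncomputable def argData : (σ : Ty) → ArgData σ.args
    | .base => PUnit.unit
    | .arrow σ τ => ((quoteEq σ, argData τ) : ArgData (σ :: τ.args))
end

/-- The quote function `↓σ : Bσ → Λ`. -/
noncomputable def quote (σ : Ty) (a : σ.sem) : Tm := (quoteEq σ).1 a

/-- The term `≐σ : σσB` denoting the identity predicate on `Bσ`. -/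
noncomputable def eqTm (σ : Ty) : Tm := (quoteEq σ).2

/-- The term `∀σ : (σB)B`. -/
noncomputable def allTm (σ : Ty) : Tm := allTmAux σ (quote σ)


/-- Propositional formulas: `s ::= x | ⊥ | s → s` with `x` a variable of type `B`. -/
inductive Propositional : Tm → Prop
  | var (n : ℕ) : Propositional (vr n .base)
  | bot : Propositional botTm
  | imp {s t} : Propositional s → Propositional t → Propositional (impTm s t)

/-- A type-respecting substitution of terms for variables. -/
def IsSubstitution (ρ : ℕ × Ty → Tm) : Prop := ∀ n σ, HasTy (ρ (n, σ)) σ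

/-- A formula is tautologous if it is a substitution instance of a tautology
(a valid propositional formula). -/
def Tautologous (s : Tm) : Prop :=
  ∃ t ρ, Propositional t ∧ ValidFml t ∧ IsSubstitution ρ ∧ s = substAux ρ t

/-- The proof system: Triv, Weak, Ded, MP, DN, Lam and Boolean replacement (BR).
Sequents consist of a finite set of formulas and a formula. -/
inductive Ded : Finset Tm → Tm → Prop
  | triv {A s} : (∀ t ∈ A, HasTy t .base) → HasTy s .base → Ded (insert s A) s
  | weak {A s t} : HasTy s .base → Ded A t → Ded (insert s A) t
  | ded {A s t} : Ded (insert s A) t → Ded A (impTm s t)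
  | mp {A s t} : Ded A (impTm s t) → Ded A s → Ded A t
  | dn {A s} : Ded A (negTm (negTm s)) → Ded A s
  | lam {A s t} : Ded A s → LamEq s t → HasTy t .base → Ded A t
  | br {A s t} (C : Ctx) : C.Admissible A → Ded A (equivTm s t) →
      Ded A (C.fill s) → HasTy (C.fill t) .base → Ded A (C.fill t)


/-! Kalmár's argument. Fix a substitution `ρ`. For an interpretation `I`, the literals `±ρ(x)`
(`x` an atom) that are true under `I` derive the instance `ρ(t)` of a propositional formula `t` if `I` satisfies `t`,
and its negation otherwise. If `t` is valid, `ρ(t)` is thus derivable from every such set of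
literals, and the literals are discharged one atom at a time by case analysis. -/

lemma hasTy_botTm : HasTy botTm .base := HasTy.name .bot

lemma hasTy_impTm {s t : Tm} (hs : HasTy s .base) (ht : HasTy t .base) :
    HasTy (impTm s t) .base :=
  HasTy.app (HasTy.app (HasTy.name .imp) hs) ht

lemma hasTy_negTm {s : Tm} (hs : HasTy s .base) : HasTy (negTm s) .base :=
  hasTy_impTm hs hasTy_botTm

lemma eval_app (I : Interp) (s : Tm) {t : Tm} {τ : Ty} (ht : typeOf t = some τ) (σ : Ty) :
    eval I (.app s t) σ = eval I s (.arrow τ σ) (eval I t τ) := by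
  change (match typeOf t with
    | some τ => eval I s (.arrow τ σ) (eval I t τ)
    | none => default) = _
  rw [ht]

lemma eval_impTm (I : Interp) {s t : Tm} (hs : typeOf s = some .base)
    (ht : typeOf t = some .base) :
    eval I (impTm s t) .base = (!eval I s .base || eval I t .base) := by
  rw [impTm, eval_app I _ ht, eval_app I _ hs]
  rfl

lemma substAux_impTm (ρ : ℕ × Ty → Tm) (s t : Tm) :
    substAux ρ (impTm s t) = impTm (substAux ρ s) (substAux ρ t) := rfl

def signed (b : Bool) (s : Tm) : Tm := cond b s (negTm s)

@[simp] lemma signed_true (s : Tm) : signed true s = s := rfl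

@[simp] lemma signed_false (s : Tm) : signed false s = negTm s := rfl

lemma hasTy_signed (b : Bool) {s : Tm} (hs : HasTy s .base) : HasTy (signed b s) .base := by
  cases b
  exacts [hasTy_negTm hs, hs]

namespace Propositional

variable {t : Tm}

lemma typeOf_eq (ht : Propositional t) : typeOf t = some .base := by
  induction ht with
  | var n => rfl
  | bot => rfl
  | imp _ _ iha ihb => simp [impTm, typeOf, iha, ihb, Name.ty]

lemma hasTy_substAux (ht : Propositional t) {ρ : ℕ × Ty → Tm} (hρ : IsSubstitution ρ) :
    HasTy (substAux ρ t) .base := by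
  induction ht with
  | var n => exact hρ n .base
  | bot => exact hasTy_botTm
  | imp _ _ iha ihb => exact hasTy_impTm iha ihb

end Propositional

namespace Ded

variable {A : Finset Tm} {s t : Tm}

lemma of_mem (hA : ∀ r ∈ A, HasTy r .base) (hs : s ∈ A) : Ded A s := by
  rw [← Finset.insert_eq_self.mpr hs]
  exact triv hA (hA s hs)

lemma imp_of_neg (hA : ∀ r ∈ A, HasTy r .base) (hs : HasTy s .base) (ht : HasTy t .base)
    (h : Ded A (negTm s)) : Ded A (impTm s t) := by
  have hfalse : Ded (insert s A) botTm := mp (weak hs h) (triv hA hs)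
  exact ded (dn (ded (weak (hasTy_negTm ht) hfalse)))

lemma imp_of_right (hs : HasTy s .base) (h : Ded A t) : Ded A (impTm s t) :=
  ded (weak hs h)

lemma neg_imp (hA : ∀ r ∈ A, HasTy r .base) (hst : HasTy (impTm s t) .base) (hs : Ded A s)
    (ht : Ded A (negTm t)) : Ded A (negTm (impTm s t)) := by
  have h : Ded (insert (impTm s t) A) t := mp (triv hA hst) (weak hst hs)
  exact ded (mp (weak hst ht) h)

lemma by_cases (hA : ∀ r ∈ A, HasTy r .base) (hs : HasTy s .base) (ht : HasTy t .base)
    (hpos : Ded (insert s A) t) (hneg : Ded (insert (negTm s) A) t) : Ded A t := by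
  have hnt := hasTy_negTm ht
  have hA' : ∀ r ∈ insert (negTm t) A, HasTy r .base :=
    (Finset.forall_mem_insert _ _ _).2 ⟨hnt, hA⟩
  have hnot_t : Ded (insert (negTm t) A) (negTm t) := triv hA hnt
  have hnot_s : Ded (insert (negTm t) A) (negTm s) :=
    ded (mp (weak hs hnot_t) (mp (weak hs (weak hnt (ded hpos))) (triv hA' hs)))
  exact dn (ded (mp hnot_t (mp (weak hnt (ded hneg)) hnot_s)))

end Ded

def Interp.ofBool (v : ℕ → Bool) : Interp
  | n, .base => v n
  | _, .arrow _ _ => default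

def litCtx (u : ℕ → Tm) (v : ℕ → Bool) (S : Finset ℕ) : Finset Tm :=
  S.image fun n => signed (v n) (u n)

lemma litCtx_hasTy {u : ℕ → Tm} (hu : ∀ n, HasTy (u n) .base) (v : ℕ → Bool) (S : Finset ℕ) :
    ∀ r ∈ litCtx u v S, HasTy r .base := by
  simp only [litCtx, Finset.forall_mem_image]
  exact fun n _ => hasTy_signed (v n) (hu n)

lemma litCtx_insert_update (u : ℕ → Tm) (v : ℕ → Bool) {n : ℕ} {S : Finset ℕ} (hn : n ∉ S)
    (b : Bool) :
    litCtx u (Function.update v n b) (insert n S) = insert (signed b (u n)) (litCtx u v S) := by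
  rw [litCtx, Finset.image_insert, Function.update_self]
  congr 1
  refine Finset.image_congr fun m hm => ?_
  rw [Function.update_of_ne (ne_of_mem_of_not_mem hm hn)]

lemma ded_empty_of_forall_litCtx {u : ℕ → Tm} (hu : ∀ n, HasTy (u n) .base) {r : Tm}
    (hr : HasTy r .base) (S : Finset ℕ) (h : ∀ v, Ded (litCtx u v S) r) : Ded ∅ r := by
  induction S using Finset.induction_on with
  | empty => simpa [litCtx] using h fun _ => true
  | @insert n S hn ih =>
    refine ih fun v => Ded.by_cases (litCtx_hasTy hu v S) (hu n) hr ?_ ?_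
    · simpa only [litCtx_insert_update u v hn, signed_true] using h (Function.update v n true)
    · simpa only [litCtx_insert_update u v hn, signed_false] using h (Function.update v n false)

lemma Propositional.ded_signed_substAux {t : Tm} (ht : Propositional t) {A : Finset Tm}
    (hA : ∀ r ∈ A, HasTy r .base) {ρ : ℕ × Ty → Tm} (hρ : IsSubstitution ρ) (I : Interp)
    (hlit : ∀ n, (n, Ty.base) ∈ fv t → Ded A (signed (I n .base) (ρ (n, .base)))) :
    Ded A (signed (eval I t .base) (substAux ρ t)) := by
  induction ht with
  | var n => exact hlit n (by simp [vr, fv])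
  | bot => exact Ded.ded (Ded.triv hA hasTy_botTm)
  | @imp a b ha hb iha ihb =>
    have iha := iha fun n hn => hlit n (by simp [impTm, fv, hn])
    have ihb := ihb fun n hn => hlit n (by simp [impTm, fv, hn])
    have hta := ha.hasTy_substAux hρ
    have htb := hb.hasTy_substAux hρ
    rw [eval_impTm I ha.typeOf_eq hb.typeOf_eq, substAux_impTm]
    cases hva : eval I a .base <;> cases hvb : eval I b .base <;>
      simp only [hva, hvb, signed_true, signed_false, Bool.not_false, Bool.not_true,
        Bool.true_or, Bool.false_or] at iha ihb ⊢
    · exact Ded.imp_of_neg hA hta htb iha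
    · exact Ded.imp_of_neg hA hta htb iha
    · exact Ded.neg_imp hA (hasTy_impTm hta htb) iha ihb
    · exact Ded.imp_of_right hta ihb

/-- Taut: every tautologous formula is deducible. -/
theorem taut (s : Tm) (h : Tautologous s) : Ded ∅ s := by
  obtain ⟨t, ρ, ht, hvalid, hρ, rfl⟩ := h
  let u : ℕ → Tm := fun n => ρ (n, .base)
  have hu : ∀ n, HasTy (u n) .base := fun n => hρ n .base
  let atoms : Finset ℕ := (fv t).image Prod.fst
  refine ded_empty_of_forall_litCtx hu (ht.hasTy_substAux hρ) atoms fun v => ?_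
  have hsigned := ht.ded_signed_substAux (litCtx_hasTy hu v atoms) hρ (Interp.ofBool v)
    fun n hn => Ded.of_mem (litCtx_hasTy hu v atoms) (Finset.mem_image_of_mem _
      (Finset.mem_image_of_mem Prod.fst hn))
  rwa [hvalid (Interp.ofBool v), signed_true] at hsigned

end PTT
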